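/- arXiv:1301.2525 — 4 statements merged into one kernel-verified Lean document; each statement's English description precedes it below -/
import Mathlib

section
/- Let d ≥ 1. There exists a constant C > 0, depending only on d, such that for every N ≥ 1, every f ∈ L_N(ℝ^d), every i ∈ {1,…,d}, and every x ∈ ℝ^d, the principal value R_i f(x) = lim_{ε'→0⁺} ∫_{{y : |x−y| > ε'}} f(y)·(x_i − y_i)/|x−y|^{d+1} dy satisfies |R_i f(x)| ≤ C·( sup_{t∈ℝ^d} |∇f(t)| + ‖f‖_{L¹(ℝ^d)} ), where |∇f(t)| is the Euclidean norm of the gradient of f at t. -/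
/-!
For `0 < r ≤ 1` split the truncated integral at `‖x - y‖ = 1`. Far from `x` the kernel is
bounded by `1`, so that part is at most `‖f‖₁`. On the annulus `r < ‖x - y‖ ≤ 1` the kernel is
odd, hence has mean zero, so `f y` may be replaced by `f y - f x`; the mean value inequality
bounds the integrand by `‖∇f‖_∞ ‖x - y‖^(1-d)`, whose integral over the unit ball is
`d · vol(B(0,1))`, uniformly in `r`. The bound passes to the principal value.
-/

open MeasureTheory Filter Topology Real

noncomputable section

abbrev Ed (d : ℕ) := EuclideanSpace ℝ (Fin d)

/-- Truncated Riesz integral: `∫_{‖x-y‖>ε} f(y) (x_i - y_i)/‖x-y‖^(d+1) dy`. -/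
noncomputable def truncRiesz (d : ℕ) (i : Fin d) (f : Ed d → ℝ) (x : Ed d) (ε : ℝ) : ℝ :=
  ∫ y in {y : Ed d | ε < ‖x - y‖}, f y * ((x i - y i) / ‖x - y‖ ^ (d + 1))

/-- The principal value Riesz transform of `f` at `x` exists and equals `L`. -/
def RieszPV (d : ℕ) (i : Fin d) (f : Ed d → ℝ) (x : Ed d) (L : ℝ) : Prop :=
  Tendsto (truncRiesz d i f x) (𝓝[>] (0:ℝ)) (𝓝 L)

/-- The class `L_N(ℝ^d)` with constants `C` and `ε`. -/
structure IsLN (d N : ℕ) (f : Ed d → ℝ) (C ε : ℝ) : Prop where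
  smooth : ContDiff ℝ 1 f
  Cpos : 0 < C
  eps_nonneg : 0 ≤ ε
  eps_lt_one : ε < 1
  decay : ∀ x : Ed d, |f x| ≤ C * (1 + ‖x‖) ^ (-(d:ℝ) - N + ε)
  deriv_decay : ∀ (x : Ed d) (j : Fin d),
      |fderiv ℝ f x (EuclideanSpace.single j 1)| ≤ C * (1 + ‖x‖) ^ (-(d:ℝ) - N - 1 + ε)
  moments : ∀ β : Fin d → ℕ, (∑ j, β j) < N →
      ∫ x : Ed d, (∏ j, (x j) ^ (β j)) * f x = 0

open Metric Set Module

section Odd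

variable {G F : Type*} [AddGroup G] [MeasurableSpace G] [MeasurableNeg G]
  [NormedAddCommGroup F] [NormedSpace ℝ F] (μ : Measure G) [μ.IsNegInvariant]

theorem integral_eq_zero_of_odd {g : G → F} (hg : ∀ z, g (-z) = -g z) : ∫ z, g z ∂μ = 0 := by
  have h := integral_neg_eq_self g μ
  simp only [hg, integral_neg] at h
  have h2 : (2 : ℝ) • ∫ z, g z ∂μ = 0 := by
    rw [two_smul]
    nth_rw 1 [← h]
    exact neg_add_cancel _
  exact (smul_eq_zero.mp h2).resolve_left two_ne_zero

theorem setIntegral_eq_zero_of_odd {s : Set G} (hs : MeasurableSet s) (hs_neg : -s = s)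
    {g : G → F} (hg : ∀ z, g (-z) = -g z) : ∫ z in s, g z ∂μ = 0 := by
  rw [← integral_indicator hs]
  refine integral_eq_zero_of_odd μ fun z => ?_
  by_cases hz : z ∈ s
  · have hz' : -z ∈ s := by rwa [← hs_neg, Set.neg_mem_neg]
    simp [hz, hz', hg]
  · have hz' : -z ∉ s := by rwa [← hs_neg, Set.neg_mem_neg]
    simp [hz, hz']

end Odd

section Annulus

variable {E F : Type*} [NormedAddCommGroup E] [MeasurableSpace E] [BorelSpace E]

theorem integrableOn_closedBall_diff_closedBall [ProperSpace E] [NormedAddCommGroup F]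
    (μ : Measure E) [IsFiniteMeasureOnCompacts μ] {g : E → F} (hg : ContinuousOn g {0}ᶜ)
    (R : ℝ) {r : ℝ} (hr : 0 < r) : IntegrableOn g (closedBall 0 R \ closedBall 0 r) μ := by
  have hK : IsCompact (closedBall (0 : E) R \ ball 0 r) :=
    (isCompact_closedBall 0 R).diff isOpen_ball
  refine (hg.mono ?_ |>.integrableOn_compact hK).mono_set
    (sdiff_subset_sdiff_right ball_subset_closedBall)
  rintro z ⟨-, hz⟩ rfl
  exact hz (mem_ball_self hr)

theorem integral_closedBall_diff_closedBall_norm_rpow [NormedSpace ℝ E] [Nontrivial E]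
    [FiniteDimensional ℝ E] (μ : Measure E) [μ.IsAddHaarMeasure] {r : ℝ} (hr : 0 ≤ r)
    (hr1 : r ≤ 1) :
    ∫ z in closedBall 0 1 \ closedBall 0 r, ‖z‖ ^ (1 - (finrank ℝ E : ℝ)) ∂μ
      = finrank ℝ E * μ.real (ball 0 1) * (1 - r) := by
  set n := finrank ℝ E
  have hn : 1 ≤ n := finrank_pos
  have hradial : ∀ y ∈ Ioi (0 : ℝ), y ^ (n - 1) • (Ioc r 1).indicator (· ^ (1 - (n : ℝ))) y
      = (Ioc r 1).indicator 1 y := by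
    intro y (hy : 0 < y)
    by_cases hyr : y ∈ Ioc r 1
    · rw [indicator_of_mem hyr, indicator_of_mem hyr, smul_eq_mul, ← rpow_natCast,
        Nat.cast_sub hn, ← rpow_add hy]
      simp
    · simp [hyr]
  calc ∫ z in closedBall 0 1 \ closedBall 0 r, ‖z‖ ^ (1 - (n : ℝ)) ∂μ
      = ∫ z, (Ioc r 1).indicator (· ^ (1 - (n : ℝ))) ‖z‖ ∂μ := by
        rw [← integral_indicator (measurableSet_closedBall.diff measurableSet_closedBall)]
        congr 1 with z
        simp [indicator, and_comm]
    _ = n • μ.real (ball 0 1) • ∫ y in Ioi (0 : ℝ), (Ioc r 1).indicator 1 y := by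
        rw [integral_fun_norm_addHaar, setIntegral_congr_fun measurableSet_Ioi hradial]
    _ = n * μ.real (ball 0 1) * (1 - r) := by
        rw [integral_indicator measurableSet_Ioc, Measure.restrict_restrict measurableSet_Ioc,
          inter_eq_left.mpr (Ioc_subset_Ioi_self.trans (Ioi_subset_Ioi hr))]
        simp [hr1, nsmul_eq_mul, mul_assoc]

end Annulus

section RieszKernel

variable {d : ℕ} (i : Fin d)

def rieszKernel (z : Ed d) : ℝ := z i / ‖z‖ ^ (d + 1)

theorem rieszKernel_neg (z : Ed d) : rieszKernel i (-z) = -rieszKernel i z := by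
  simp [rieszKernel, neg_div]

theorem measurable_rieszKernel : Measurable (rieszKernel i) := by
  unfold rieszKernel
  fun_prop

theorem continuousOn_rieszKernel : ContinuousOn (rieszKernel i) {0}ᶜ := by
  refine ((EuclideanSpace.proj i).continuous.continuousOn).div (by fun_prop) fun z hz => ?_
  exact pow_ne_zero _ (norm_ne_zero_iff.mpr hz)

theorem abs_rieszKernel_le (z : Ed d) : |rieszKernel i z| ≤ (‖z‖ ^ d)⁻¹ := by
  rcases eq_or_ne z 0 with rfl | hz
  · simp [rieszKernel]
  have hz : 0 < ‖z‖ := norm_pos_iff.mpr hz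
  rw [rieszKernel, abs_div, abs_of_pos (pow_pos hz _), pow_succ, div_le_iff₀ (by positivity),
    inv_mul_cancel_left₀ (by positivity)]
  exact PiLp.norm_apply_le z i

theorem abs_mul_rieszKernel_le {z : Ed d} (hz : 1 ≤ ‖z‖) (a : ℝ) :
    |a * rieszKernel i z| ≤ |a| := by
  rw [abs_mul]
  exact mul_le_of_le_one_right (abs_nonneg a)
    ((abs_rieszKernel_le i z).trans (inv_le_one_of_one_le₀ (one_le_pow₀ hz)))

theorem setIntegral_closedBall_diff_closedBall_rieszKernel (R r : ℝ) :
    ∫ z in closedBall 0 R \ closedBall 0 r, rieszKernel i z = 0 :=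
  setIntegral_eq_zero_of_odd _ (measurableSet_closedBall.diff measurableSet_closedBall)
    (by ext z; simp) (rieszKernel_neg i)

end RieszKernel

section Truncated

variable {d : ℕ} (i : Fin d) {f : Ed d → ℝ}

theorem truncRiesz_eq_setIntegral (x : Ed d) (r : ℝ) :
    truncRiesz d i f x r = ∫ z in (closedBall 0 r)ᶜ, f (x - z) * rieszKernel i z := by
  rw [← (volume.measurePreserving_sub_left x).setIntegral_preimage_emb
    (measurableEmbedding_subLeft x)]
  simp only [truncRiesz, rieszKernel, sub_sub_cancel, PiLp.sub_apply]
  congr! 2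
  ext y
  simp

theorem abs_sub_mul_rieszKernel_le {M : ℝ} (hf : Differentiable ℝ f)
    (hM : ∀ t, ‖fderiv ℝ f t‖ ≤ M) (x z : Ed d) :
    |(f (x - z) - f x) * rieszKernel i z| ≤ M * ‖z‖ ^ (1 - d : ℝ) := by
  have hM0 : 0 ≤ M := (norm_nonneg _).trans (hM 0)
  rcases eq_or_ne z 0 with rfl | hz
  · simp only [rieszKernel, PiLp.zero_apply, zero_div, mul_zero, abs_zero]
    positivity
  have hz : 0 < ‖z‖ := norm_pos_iff.mpr hz
  have hmvt : |f (x - z) - f x| ≤ M * ‖z‖ := by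
    simpa using convex_univ.norm_image_sub_le_of_norm_fderiv_le (fun t _ => hf t)
      (fun t _ => hM t) (mem_univ x) (mem_univ (x - z))
  calc |(f (x - z) - f x) * rieszKernel i z| ≤ M * ‖z‖ * (‖z‖ ^ d)⁻¹ := by
        rw [abs_mul]
        exact mul_le_mul hmvt (abs_rieszKernel_le i z) (abs_nonneg _) (by positivity)
    _ = M * ‖z‖ ^ (1 - d : ℝ) := by
        rw [rpow_sub hz, rpow_one, rpow_natCast, mul_assoc, div_eq_mul_inv]

theorem integrableOn_closedBall_diff_closedBall_mul_rieszKernel (hf : Continuous f) (x : Ed d)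
    (R : ℝ) {r : ℝ} (hr : 0 < r) :
    IntegrableOn (fun z => f (x - z) * rieszKernel i z) (closedBall 0 R \ closedBall 0 r) :=
  integrableOn_closedBall_diff_closedBall volume
    ((hf.comp (continuous_sub_left x)).continuousOn.mul (continuousOn_rieszKernel i)) R hr

theorem abs_setIntegral_closedBall_diff_closedBall_le {M : ℝ} (hf : Differentiable ℝ f)
    (hM : ∀ t, ‖fderiv ℝ f t‖ ≤ M) (x : Ed d) {r : ℝ} (hr : 0 < r) (hr1 : r ≤ 1) :
    |∫ z in closedBall 0 1 \ closedBall 0 r, f (x - z) * rieszKernel i z|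
      ≤ d * volume.real (ball (0 : Ed d) 1) * M := by
  have : Nontrivial (Ed d) := ⟨EuclideanSpace.single i 1, 0, by simp⟩
  set A := closedBall (0 : Ed d) 1 \ closedBall 0 r
  have hA {g : Ed d → ℝ} (hg : ContinuousOn g {0}ᶜ) : IntegrableOn g A :=
    integrableOn_closedBall_diff_closedBall volume hg 1 hr
  have hcancel : ∫ z in A, f (x - z) * rieszKernel i z
      = ∫ z in A, (f (x - z) - f x) * rieszKernel i z := by
    have hconst : IntegrableOn (fun z => f x * rieszKernel i z) A :=
      hA (continuousOn_const.mul (continuousOn_rieszKernel i))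
    simp_rw [sub_mul]
    rw [integral_sub
      (integrableOn_closedBall_diff_closedBall_mul_rieszKernel i hf.continuous x 1 hr) hconst,
      integral_const_mul,
      setIntegral_closedBall_diff_closedBall_rieszKernel, mul_zero, sub_zero]
  have hM0 : 0 ≤ M := (norm_nonneg _).trans (hM 0)
  calc |∫ z in A, f (x - z) * rieszKernel i z|
      ≤ ∫ z in A, M * ‖z‖ ^ (1 - d : ℝ) := by
        rw [hcancel, ← Real.norm_eq_abs]
        refine norm_integral_le_of_norm_le (hA (continuousOn_const.mul ?_))
          (ae_of_all _ (abs_sub_mul_rieszKernel_le i hf hM x))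
        exact fun z hz => (continuous_norm.continuousAt.rpow_const
          (.inl (norm_ne_zero_iff.mpr hz))).continuousWithinAt
    _ = M * (d * volume.real (ball (0 : Ed d) 1) * (1 - r)) := by
        have h := integral_closedBall_diff_closedBall_norm_rpow (volume : Measure (Ed d)) hr.le hr1
        rw [finrank_euclideanSpace_fin] at h
        rw [integral_const_mul, h]
    _ ≤ d * volume.real (ball (0 : Ed d) 1) * M := by
        rw [mul_comm M]
        exact mul_le_mul_of_nonneg_right
          (mul_le_of_le_one_right (by positivity) (by linarith)) hM0

theorem ae_abs_mul_rieszKernel_le_compl_closedBall (x : Ed d) :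
    ∀ᵐ z ∂volume.restrict (closedBall 0 1)ᶜ, ‖f (x - z) * rieszKernel i z‖ ≤ |f (x - z)| := by
  filter_upwards [self_mem_ae_restrict measurableSet_closedBall.compl] with z hz
  simp only [mem_compl_iff, mem_closedBall_zero_iff, not_le] at hz
  exact abs_mul_rieszKernel_le i hz.le _

theorem integrableOn_compl_closedBall_mul_rieszKernel (hfi : Integrable f) (x : Ed d) :
    IntegrableOn (fun z => f (x - z) * rieszKernel i z) (closedBall 0 1)ᶜ :=
  (hfi.comp_sub_left x).abs.integrableOn.mono'
    ((hfi.comp_sub_left x).aestronglyMeasurable.mul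
      (measurable_rieszKernel i).aestronglyMeasurable).restrict
    (ae_abs_mul_rieszKernel_le_compl_closedBall i x)

theorem abs_setIntegral_compl_closedBall_le (hfi : Integrable f) (x : Ed d) :
    |∫ z in (closedBall 0 1)ᶜ, f (x - z) * rieszKernel i z| ≤ ∫ y, |f y| := by
  have hfx : Integrable (fun z => |f (x - z)|) := (hfi.comp_sub_left x).abs
  calc |∫ z in (closedBall 0 1)ᶜ, f (x - z) * rieszKernel i z|
      ≤ ∫ z in (closedBall 0 1)ᶜ, |f (x - z)| := by
        rw [← Real.norm_eq_abs]
        exact norm_integral_le_of_norm_le hfx.integrableOn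
          (ae_abs_mul_rieszKernel_le_compl_closedBall i x)
    _ ≤ ∫ z, |f (x - z)| := setIntegral_le_integral hfx (ae_of_all _ fun _ => abs_nonneg _)
    _ = ∫ y, |f y| := integral_sub_left_eq_self (fun y => |f y|) volume x

theorem abs_truncRiesz_le {M : ℝ} (hf : Differentiable ℝ f) (hM : ∀ t, ‖fderiv ℝ f t‖ ≤ M)
    (hfi : Integrable f) (x : Ed d) {r : ℝ} (hr : 0 < r) (hr1 : r ≤ 1) :
    |truncRiesz d i f x r| ≤ d * volume.real (ball (0 : Ed d) 1) * M + ∫ y, |f y| := by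
  have hsplit : (closedBall (0 : Ed d) r)ᶜ
      = (closedBall 0 1 \ closedBall 0 r) ∪ (closedBall 0 1)ᶜ := by
    have hsub := closedBall_subset_closedBall (x := (0 : Ed d)) hr1
    ext z
    have := @hsub z
    simp only [mem_union, Set.mem_sdiff, mem_compl_iff]
    tauto
  rw [truncRiesz_eq_setIntegral, hsplit, setIntegral_union
    (disjoint_compl_right.mono_left sdiff_subset) measurableSet_closedBall.compl
    (integrableOn_closedBall_diff_closedBall_mul_rieszKernel i hf.continuous x 1 hr)
    (integrableOn_compl_closedBall_mul_rieszKernel i hfi x)]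
  exact (abs_add_le _ _).trans (add_le_add
    (abs_setIntegral_closedBall_diff_closedBall_le i hf hM x hr hr1)
    (abs_setIntegral_compl_closedBall_le i hfi x))

end Truncated

namespace IsLN

variable {d N : ℕ} {f : Ed d → ℝ} {C ε : ℝ}

theorem integrable (hf : IsLN d N f C ε) (hN : 1 ≤ N) : Integrable f := by
  have hexp : (finrank ℝ (Ed d) : ℝ) < d + N - ε := by
    have : (1 : ℝ) ≤ N := mod_cast hN
    rw [finrank_euclideanSpace_fin]
    linarith [hf.eps_lt_one]
  refine ((integrable_one_add_norm hexp).const_mul C).mono'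
    hf.smooth.continuous.aestronglyMeasurable (ae_of_all _ fun y => ?_)
  rw [Real.norm_eq_abs, show -((d : ℝ) + N - ε) = -d - N + ε by ring]
  exact hf.decay y

theorem bddAbove_norm_fderiv (hf : IsLN d N f C ε) :
    BddAbove (range fun t => ‖fderiv ℝ f t‖) := by
  obtain ⟨K, -, hK⟩ := (EuclideanSpace.basisFun (Fin d) ℝ).toBasis.exists_opNorm_le (F := ℝ)
  refine ⟨K * C, forall_mem_range.mpr fun t => hK hf.Cpos.le fun j => ?_⟩
  have hdecay : (1 + ‖t‖) ^ (-(d : ℝ) - N - 1 + ε) ≤ 1 :=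
    rpow_le_one_of_one_le_of_nonpos (by linarith [norm_nonneg t])
      (by linarith [hf.eps_lt_one, (Nat.cast_nonneg d : (0 : ℝ) ≤ d),
        (Nat.cast_nonneg N : (0 : ℝ) ≤ N)])
  simpa using (hf.deriv_decay t j).trans (mul_le_of_le_one_right hf.Cpos.le hdecay)

end IsLN

theorem riesz_pv_bound_general (d : ℕ) :
    ∃ C₀ : ℝ, 0 < C₀ ∧ ∀ (N : ℕ), 1 ≤ N → ∀ (f : Ed d → ℝ) (C ε : ℝ), IsLN d N f C ε →
      ∀ (i : Fin d) (x : Ed d) (L : ℝ), RieszPV d i f x L →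
        |L| ≤ C₀ * ((⨆ t : Ed d, ‖fderiv ℝ f t‖) + ∫ y : Ed d, |f y|) := by
  set c := d * volume.real (ball (0 : Ed d) 1)
  have hc : 0 ≤ c := by positivity
  refine ⟨c + 1, by positivity, fun N hN f C ε hf i x L hL => ?_⟩
  set M := ⨆ t : Ed d, ‖fderiv ℝ f t‖
  have hM t : ‖fderiv ℝ f t‖ ≤ M := le_ciSup hf.bddAbove_norm_fderiv t
  have hM0 : 0 ≤ M := (norm_nonneg _).trans (hM 0)
  have hI0 : 0 ≤ ∫ y, |f y| := integral_nonneg fun _ => abs_nonneg _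
  have htrunc : ∀ᶠ r in 𝓝[>] 0, |truncRiesz d i f x r| ≤ c * M + ∫ y, |f y| :=
    eventually_of_mem (Ioc_mem_nhdsGT one_pos) fun r hr =>
      abs_truncRiesz_le i (hf.smooth.differentiable one_ne_zero) hM (hf.integrable hN) x
        hr.1 hr.2
  calc |L| ≤ c * M + ∫ y, |f y| := le_of_tendsto hL.abs htrunc
    _ ≤ (c + 1) * (M + ∫ y, |f y|) := by nlinarith [mul_nonneg hc hI0]

/-- There is a constant depending only on `d` bounding the Riesz transform by the sup of the
gradient norm plus the `L¹` norm. -/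
theorem riesz_pv_bound (d : ℕ) (hd : 1 ≤ d) :
    ∃ C₀ : ℝ, 0 < C₀ ∧ ∀ (N : ℕ), 1 ≤ N → ∀ (f : Ed d → ℝ) (C ε : ℝ), IsLN d N f C ε →
      ∀ (i : Fin d) (x : Ed d) (L : ℝ), RieszPV d i f x L →
        |L| ≤ C₀ * ((⨆ t : Ed d, ‖fderiv ℝ f t‖) + ∫ y : Ed d, |f y|) :=
  riesz_pv_bound_general d

end
end

section
/- Let d ≥ 1, N ≥ 1, and let f ∈ L_N(ℝ^d). Let f̂(ω) = ∫_{ℝ^d} f(x) e^{−i x·ω} dx denote the Fourier transform of f. Then for every multi-index β with |β| < N, the partial derivative D^β f̂ exists and is continuous on ℝ^d, and D^β f̂(ω) = o(|ω|^{N−1−|β|}) as ω → 0; that is, for every γ > 0 there exists ρ > 0 such that |D^β f̂(ω)| ≤ γ·|ω|^{N−1−|β|} whenever 0 < |ω| < ρ. -/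
/-!
Differentiating under the integral sign, `D^β f̂` is the Fourier transform of `(-ix)^β f`, which
is legitimate up to order `N - 1` thanks to the decay of `f`. Expand `e^{-i⟨x,ω⟩}` to order
`M = N - 1 - |β|`: the Taylor polynomial integrates to zero against `(-ix)^β f` because of the
vanishing moments, and for purely imaginary `z` the remainder is at most `|z|^M min(2, |z|)`.
Hence `|D^β f̂(ω)| ≤ |ω|^M ∫ |x|^(N-1) |f x| min(2, |x||ω|) dx`, and this integral tends to `0`
with `ω` by dominated convergence.
-/

open MeasureTheory Filter Topology Real

noncomputable section

/-- The Fourier transform `f̂(ω) = ∫ f(x) e^{-i x·ω} dx`. -/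
noncomputable def FT (d : ℕ) (f : Ed d → ℝ) (ω : Ed d) : ℂ :=
  ∫ x : Ed d, (f x : ℂ) * Complex.exp (-(Complex.I) * ((inner ℝ x ω : ℝ) : ℂ))

/-- Partial derivative in the `j`-th coordinate direction. -/
noncomputable def pderivE {d : ℕ} {F : Type*} [NormedAddCommGroup F] [NormedSpace ℝ F]
    (j : Fin d) (f : Ed d → F) : Ed d → F :=
  fun x => fderiv ℝ f x (EuclideanSpace.single j 1)

/-- Iterated partial derivatives along a list of coordinate directions. -/
noncomputable def mderivL {d : ℕ} {F : Type*} [NormedAddCommGroup F] [NormedSpace ℝ F] :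
    List (Fin d) → (Ed d → F) → (Ed d → F)
  | [], f => f
  | j :: l, f => pderivE j (mderivL l f)

/-- The list of coordinate directions encoding the multi-index `β`. -/
def mIdxList {d : ℕ} (β : Fin d → ℕ) : List (Fin d) :=
  (List.finRange d).flatMap fun j => List.replicate (β j) j

/-- The multi-index partial derivative `D^β f`. -/
noncomputable def mderiv {d : ℕ} {F : Type*} [NormedAddCommGroup F] [NormedSpace ℝ F]
    (β : Fin d → ℕ) (f : Ed d → F) : Ed d → F :=
  mderivL (mIdxList β) f

open scoped Nat FourierTransform

def expRem (n : ℕ) (z : ℂ) : ℂ :=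
  Complex.exp z - ∑ k ∈ Finset.range n, z ^ k / k !

lemma hasDerivAt_sum_range_succ_pow_div_factorial (n : ℕ) (z : ℂ) :
    HasDerivAt (fun w : ℂ => ∑ k ∈ Finset.range (n + 1), w ^ k / k !)
      (∑ k ∈ Finset.range n, z ^ k / k !) z := by
  induction n with
  | zero => simpa using hasDerivAt_const z (1 : ℂ)
  | succ n ih =>
    have hpow : HasDerivAt (fun w : ℂ => w ^ (n + 1) / (n + 1)!) (z ^ n / n !) z := by
      refine ((hasDerivAt_pow (n + 1) z).div_const ((n + 1)! : ℂ)).congr_deriv ?_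
      rw [Nat.factorial_succ]
      push_cast
      field_simp
    simpa only [← Finset.sum_range_succ] using ih.fun_add hpow

lemma hasDerivAt_expRem_succ (n : ℕ) (z : ℂ) : HasDerivAt (expRem (n + 1)) (expRem n z) z :=
  (Complex.hasDerivAt_exp z).sub (hasDerivAt_sum_range_succ_pow_div_factorial n z)

@[fun_prop]
lemma continuous_expRem (n : ℕ) : Continuous (expRem n) := by
  unfold expRem; fun_prop

lemma expRem_succ_zero (n : ℕ) : expRem (n + 1) 0 = 0 := by
  simp [expRem, Finset.sum_range_succ']

lemma expRem_succ (n : ℕ) (z : ℂ) : expRem (n + 1) z = expRem n z - z ^ n / n ! := by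
  rw [expRem, expRem, Finset.sum_range_succ, sub_add_eq_sub_sub]

lemma norm_expRem_ofReal_mul_I_le (n : ℕ) (t : ℝ) : ‖expRem n (t * Complex.I)‖ ≤ |t| ^ n := by
  induction n generalizing t with
  | zero => simp [expRem, Complex.norm_exp_ofReal_mul_I]
  | succ n ih =>
    have hderiv : ∀ s : ℝ, HasDerivAt (fun s : ℝ => expRem (n + 1) (s * Complex.I))
        (expRem n (s * Complex.I) * Complex.I) s := fun s => by
      simpa using ((hasDerivAt_expRem_succ n (s * Complex.I)).comp (s : ℂ)
        ((hasDerivAt_id (s : ℂ)).mul_const Complex.I)).comp_ofReal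
    have hbound : ∀ s ∈ Set.Icc (-|t|) |t|, ‖expRem n (s * Complex.I) * Complex.I‖ ≤ |t| ^ n :=
      fun s hs => by
        rw [norm_mul, Complex.norm_I, mul_one]
        exact (ih s).trans (pow_le_pow_left₀ (abs_nonneg s) (abs_le.mpr hs) n)
    have hmvt := (convex_Icc (-|t|) |t|).norm_image_sub_le_of_norm_hasDerivWithin_le
      (fun s _ => (hderiv s).hasDerivWithinAt) hbound
      (show (0 : ℝ) ∈ Set.Icc (-|t|) |t| by simp) (abs_le.mp le_rfl)
    simpa [expRem_succ_zero, pow_succ] using hmvt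

lemma norm_expRem_succ_le_of_re_eq_zero (n : ℕ) {z : ℂ} (hz : z.re = 0) :
    ‖expRem (n + 1) z‖ ≤ ‖z‖ ^ n * min 2 ‖z‖ := by
  obtain ⟨t, rfl⟩ : ∃ t : ℝ, z = t * Complex.I := ⟨z.im, Complex.ext (by simp [hz]) (by simp)⟩
  have hnorm : ‖(t * Complex.I : ℂ)‖ = |t| := by simp
  have hrem (m : ℕ) := norm_expRem_ofReal_mul_I_le m t
  rw [hnorm]
  rcases le_total 2 |t| with h | h
  · rw [min_eq_left h]
    calc ‖expRem (n + 1) (t * Complex.I)‖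
        ≤ ‖expRem n (t * Complex.I)‖ + ‖(t * Complex.I) ^ n / (n ! : ℂ)‖ := by
          rw [expRem_succ]; exact norm_sub_le _ _
      _ ≤ |t| ^ n + |t| ^ n := by
          gcongr
          · exact hrem n
          · rw [norm_div, norm_pow, hnorm, Complex.norm_natCast]
            exact div_le_self (by positivity) (mod_cast n.factorial_pos)
      _ = |t| ^ n * 2 := by ring
  · rw [min_eq_right h, ← pow_succ]; exact hrem (n + 1)

lemma integrable_mul_of_norm_le_pow {E R : Type*} [NormedAddCommGroup E] [MeasurableSpace E]
    [NormedRing R] {μ : Measure E} {g h : E → R} {k : ℕ} {c : ℝ}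
    (hgk : Integrable (fun x => ‖x‖ ^ k * ‖g x‖) μ) (hg : AEStronglyMeasurable g μ)
    (hh : AEStronglyMeasurable h μ) (hle : ∀ x, ‖h x‖ ≤ c * ‖x‖ ^ k) :
    Integrable (fun x => h x * g x) μ :=
  (hgk.const_mul c).mono' (hh.mul hg) (ae_of_all _ fun x =>
    (norm_mul_le _ _).trans <| by
      rw [← mul_assoc]; exact mul_le_mul_of_nonneg_right (hle x) (norm_nonneg _))

lemma norm_mul_min_two_le (a : ℝ) {b : ℝ} (hb : 0 ≤ b) : ‖a * min 2 b‖ ≤ 2 * ‖a‖ := by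
  rw [norm_mul, Real.norm_of_nonneg (le_min zero_le_two hb), mul_comm]
  gcongr
  exact min_le_left _ _

lemma integrable_mul_min_two_norm_mul {E F : Type*} [NormedAddCommGroup E] [MeasurableSpace E]
    [OpensMeasurableSpace E] [NormedAddCommGroup F] {μ : Measure E} {w : E → ℝ}
    (hw : Integrable w μ) (ω : F) :
    Integrable (fun x => w x * min 2 (‖x‖ * ‖ω‖)) μ :=
  (hw.norm.const_mul 2).mono' (hw.1.mul (by fun_prop : Continuous _).aestronglyMeasurable)
    (ae_of_all _ fun x => norm_mul_min_two_le _ (by positivity))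

lemma tendsto_integral_mul_min_two_norm_mul {E F : Type*} [NormedAddCommGroup E]
    [MeasurableSpace E] [OpensMeasurableSpace E] [NormedAddCommGroup F] {μ : Measure E}
    {w : E → ℝ} (hw : Integrable w μ) :
    Tendsto (fun ω : F => ∫ x, w x * min 2 (‖x‖ * ‖ω‖) ∂μ) (𝓝 0) (𝓝 0) := by
  have hlim (x : E) : Tendsto (fun ω : F => w x * min 2 (‖x‖ * ‖ω‖)) (𝓝 0) (𝓝 0) := by
    simpa using (by fun_prop : Continuous fun ω : F => w x * min 2 (‖x‖ * ‖ω‖)).tendsto 0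
  simpa using tendsto_integral_filter_of_dominated_convergence (fun x => 2 * ‖w x‖)
    (Eventually.of_forall fun ω => (integrable_mul_min_two_norm_mul hw ω).1)
    (Eventually.of_forall fun ω => ae_of_all _ fun x => norm_mul_min_two_le _ (by positivity))
    (hw.norm.const_mul 2) (ae_of_all _ hlim)

lemma sum_list_count_eq_length {α : Type*} [Fintype α] [DecidableEq α] (l : List α) :
    ∑ a, l.count a = l.length := by
  simpa using Multiset.sum_count_eq_card (s := Finset.univ) (m := (l : Multiset α))
    (fun a _ => Finset.mem_univ a)

section Monomial

variable {d : ℕ}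

def negIMonomial (l : List (Fin d)) (x : Ed d) : ℂ :=
  (l.map fun j => -Complex.I * x j).prod

lemma negIMonomial_cons (j : Fin d) (l : List (Fin d)) (x : Ed d) :
    negIMonomial (j :: l) x = -Complex.I * x j * negIMonomial l x := by
  simp [negIMonomial]

lemma norm_negIMonomial_le (l : List (Fin d)) (x : Ed d) :
    ‖negIMonomial l x‖ ≤ ‖x‖ ^ l.length := by
  induction l with
  | nil => simp [negIMonomial]
  | cons j l ih =>
    rw [negIMonomial_cons, norm_mul, List.length_cons, pow_succ']
    gcongr
    simpa using PiLp.norm_apply_le x j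

@[fun_prop]
lemma continuous_negIMonomial (l : List (Fin d)) : Continuous (negIMonomial l) := by
  unfold negIMonomial
  induction l with
  | nil => exact continuous_const
  | cons j l ih =>
    simp only [List.map_cons, List.prod_cons]
    exact (continuous_const.mul (Complex.continuous_ofReal.comp
      (EuclideanSpace.proj j : Ed d →L[ℝ] ℝ).continuous)).mul ih

lemma negIMonomial_eq_prod_pow_count (l : List (Fin d)) (x : Ed d) :
    negIMonomial l x = (-Complex.I) ^ l.length * ∏ j, ((x j : ℝ) : ℂ) ^ l.count j := by
  rw [negIMonomial, List.prod_map_mul, List.map_const', List.prod_replicate,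
    Finset.prod_list_map_count]
  congr 1
  refine Finset.prod_subset (Finset.subset_univ _) fun j _ hj => ?_
  rw [List.count_eq_zero_of_not_mem (by simpa using hj), pow_zero]

lemma length_mIdxList (β : Fin d → ℕ) : (mIdxList β).length = ∑ j, β j := by
  simp [mIdxList, List.length_flatMap, Fin.sum_univ_def]

lemma neg_I_mul_inner_mul_negIMonomial (l : List (Fin d)) (x ω : Ed d) :
    -Complex.I * ((inner ℝ x ω : ℝ) : ℂ) * negIMonomial l x
      = ∑ i, (ω i : ℂ) * negIMonomial (i :: l) x := by
  simp only [negIMonomial_cons, PiLp.inner_apply, Real.inner_apply, Complex.ofReal_sum,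
    Complex.ofReal_mul, Finset.mul_sum, Finset.sum_mul]
  exact Finset.sum_congr rfl fun i _ => by ring

lemma norm_neg_I_mul_inner_pow_mul_negIMonomial_le (k : ℕ) (l : List (Fin d)) (x ω : Ed d) :
    ‖(-Complex.I * ((inner ℝ x ω : ℝ) : ℂ)) ^ k * negIMonomial l x‖
      ≤ ‖ω‖ ^ k * ‖x‖ ^ (l.length + k) := by
  rw [norm_mul, norm_pow, norm_mul, norm_neg, Complex.norm_I, one_mul, Complex.norm_real,
    pow_add, mul_comm (‖x‖ ^ l.length), ← mul_assoc, ← mul_pow, mul_comm ‖ω‖]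
  gcongr
  · exact norm_inner_le_norm x ω
  · exact norm_negIMonomial_le l x

lemma norm_negIMonomial_mul_expRem_le (l : List (Fin d)) (M : ℕ) (x ω : Ed d) :
    ‖negIMonomial l x * expRem (M + 1) (-Complex.I * ((inner ℝ x ω : ℝ) : ℂ))‖
      ≤ ‖ω‖ ^ M * ‖x‖ ^ (l.length + M) * min 2 (‖x‖ * ‖ω‖) := by
  set z := -Complex.I * ((inner ℝ x ω : ℝ) : ℂ)
  have hz : ‖z‖ ≤ ‖x‖ * ‖ω‖ := by simpa [z] using norm_inner_le_norm (𝕜 := ℝ) x ω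
  calc ‖negIMonomial l x * expRem (M + 1) z‖
      ≤ ‖x‖ ^ l.length * (‖z‖ ^ M * min 2 ‖z‖) := by
        rw [norm_mul]
        gcongr
        · exact norm_negIMonomial_le l x
        · exact norm_expRem_succ_le_of_re_eq_zero M (by simp [z])
    _ ≤ ‖x‖ ^ l.length * ((‖x‖ * ‖ω‖) ^ M * min 2 (‖x‖ * ‖ω‖)) := by gcongr
    _ = ‖ω‖ ^ M * ‖x‖ ^ (l.length + M) * min 2 (‖x‖ * ‖ω‖) := by ring

end Monomial

section Fourier

variable {d : ℕ}

/-- `FT d f` is definitionally `FTc fun x => (f x : ℂ)`. -/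
def FTc (g : Ed d → ℂ) (ω : Ed d) : ℂ :=
  ∫ x : Ed d, g x * Complex.exp (-(Complex.I) * ((inner ℝ x ω : ℝ) : ℂ))

/-- The factor `(2π)⁻¹` turns the kernel `𝐞 (-L x ω) = e^{-2πi L x ω}` of
`VectorFourier.fourierIntegral` into `e^{-i⟨x,ω⟩}`. -/
def fourierBilin (d : ℕ) : Ed d →L[ℝ] Ed d →L[ℝ] ℝ := (2 * π)⁻¹ • innerSL ℝ

lemma fourierBilin_apply (x ω : Ed d) : fourierBilin d x ω = (2 * π)⁻¹ * inner ℝ x ω := rfl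

lemma fourierChar_fourierBilin (x ω : Ed d) :
    ((𝐞 (-(fourierBilin d).toLinearMap₁₂ x ω) : Circle) : ℂ)
      = Complex.exp (-Complex.I * ((inner ℝ x ω : ℝ) : ℂ)) := by
  rw [Real.fourierChar_apply]
  congr 1
  rw [show (fourierBilin d).toLinearMap₁₂ x ω = (2 * π)⁻¹ * inner ℝ x ω from
    fourierBilin_apply x ω]
  push_cast
  field_simp

lemma FTc_eq_fourierIntegral (g : Ed d → ℂ) :
    FTc g = VectorFourier.fourierIntegral 𝐞 volume (fourierBilin d).toLinearMap₁₂ g := by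
  ext ω
  simp only [FTc, VectorFourier.fourierIntegral, Circle.smul_def, fourierChar_fourierBilin,
    smul_eq_mul, mul_comm]

lemma contDiff_FTc {n : ℕ} {g : Ed d → ℂ}
    (hg : ∀ k ≤ n, Integrable (fun x => ‖x‖ ^ k * ‖g x‖)) : ContDiff ℝ n (FTc g) := by
  rw [FTc_eq_fourierIntegral]
  exact VectorFourier.contDiff_fourierIntegral _ fun k hk => hg k (mod_cast hk)

lemma pderivE_FTc {g : Ed d → ℂ} (hg : Integrable g)
    (hg' : Integrable (fun x => ‖x‖ * ‖g x‖)) (j : Fin d) :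
    pderivE j (FTc g) = FTc (fun x => -Complex.I * x j * g x) := by
  set L := fourierBilin d
  have hint : Integrable (VectorFourier.fourierSMulRight L g) :=
    (hg'.const_mul (2 * π * ‖L‖)).mono' hg.1.fourierSMulRight (ae_of_all _ fun x => by
      simpa only [mul_assoc] using VectorFourier.norm_fourierSMulRight_le L g x)
  have hLx (x : Ed d) : L x (EuclideanSpace.single j 1) = (2 * π)⁻¹ * x j := by
    simp [L, fourierBilin_apply, EuclideanSpace.inner_single_right]
  ext ω
  rw [pderivE, FTc_eq_fourierIntegral, VectorFourier.fderiv_fourierIntegral L hg hg',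
    VectorFourier.fourierIntegral_continuousLinearMap_apply continuous_fourierChar hint,
    FTc_eq_fourierIntegral]
  congr 1
  ext x
  rw [VectorFourier.fourierSMulRight_apply, hLx, Complex.real_smul, smul_eq_mul]
  push_cast
  field_simp

lemma mderivL_FTc {g : Ed d → ℂ} (hg : AEStronglyMeasurable g) :
    ∀ l : List (Fin d), (∀ k ≤ l.length, Integrable (fun x => ‖x‖ ^ k * ‖g x‖)) →
      mderivL l (FTc g) = FTc (fun x => negIMonomial l x * g x)
  | [], _ => by simp [mderivL, negIMonomial]
  | j :: l, hmom => by
    have hmom' : ∀ k ≤ l.length, Integrable (fun x => ‖x‖ ^ k * ‖g x‖) := fun k hk =>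
      hmom k (by simp; omega)
    have hint : Integrable (fun x => negIMonomial l x * g x) :=
      integrable_mul_of_norm_le_pow (hmom' l.length le_rfl) hg
        (continuous_negIMonomial l).aestronglyMeasurable (c := 1)
        fun x => by simpa using norm_negIMonomial_le l x
    have hint' : Integrable (fun x => ‖x‖ * ‖negIMonomial l x * g x‖) :=
      (hmom (l.length + 1) (by simp)).mono' (continuous_norm.aestronglyMeasurable.mul hint.1.norm)
        (ae_of_all _ fun x => by
          rw [Real.norm_of_nonneg (by positivity), norm_mul, pow_succ', mul_assoc]
          gcongr
          exact norm_negIMonomial_le l x)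
    simp only [mderivL, mderivL_FTc hg l hmom', pderivE_FTc hint hint', negIMonomial_cons,
      mul_assoc]

end Fourier

section VanishingMoments

variable {d N : ℕ} {g : Ed d → ℂ}

lemma integrable_neg_I_mul_inner_pow_mul_negIMonomial_mul (hg : AEStronglyMeasurable g) (k : ℕ)
    (l : List (Fin d)) (ω : Ed d) (hmom : Integrable (fun x => ‖x‖ ^ (l.length + k) * ‖g x‖)) :
    Integrable (fun x => (-Complex.I * ((inner ℝ x ω : ℝ) : ℂ)) ^ k * negIMonomial l x * g x) :=
  integrable_mul_of_norm_le_pow hmom hg (by fun_prop)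
    (norm_neg_I_mul_inner_pow_mul_negIMonomial_le k l · ω)

lemma integral_neg_I_mul_inner_pow_mul_negIMonomial_mul_eq_zero
    (hg : AEStronglyMeasurable g) (hmom : ∀ k < N, Integrable (fun x => ‖x‖ ^ k * ‖g x‖))
    (hvan : ∀ l : List (Fin d), l.length < N → ∫ x, negIMonomial l x * g x = 0) (ω : Ed d) :
    ∀ (k : ℕ) (l : List (Fin d)), l.length + k < N →
      ∫ x, (-Complex.I * ((inner ℝ x ω : ℝ) : ℂ)) ^ k * negIMonomial l x * g x = 0
  | 0, l, h => by simpa using hvan l h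
  | k + 1, l, h => by
    have hexpand : (fun x => (-Complex.I * ((inner ℝ x ω : ℝ) : ℂ)) ^ (k + 1)
          * negIMonomial l x * g x)
        = fun x => ∑ i, (ω i : ℂ) * ((-Complex.I * ((inner ℝ x ω : ℝ) : ℂ)) ^ k
          * negIMonomial (i :: l) x * g x) := by
      ext x
      rw [pow_succ, mul_assoc (_ ^ k), neg_I_mul_inner_mul_negIMonomial, Finset.mul_sum,
        Finset.sum_mul]
      exact Finset.sum_congr rfl fun i _ => by ring
    have hlen (i : Fin d) : (i :: l).length + k < N := by simp only [List.length_cons]; omega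
    rw [hexpand, integral_finsetSum _ fun i _ =>
      (integrable_neg_I_mul_inner_pow_mul_negIMonomial_mul hg k _ ω
        (hmom _ (hlen i))).const_mul _]
    refine Finset.sum_eq_zero fun i _ => ?_
    rw [integral_const_mul, integral_neg_I_mul_inner_pow_mul_negIMonomial_mul_eq_zero hg hmom
      hvan ω k (i :: l) (hlen i), mul_zero]

lemma FTc_negIMonomial_mul_eq_integral_expRem
    (hg : AEStronglyMeasurable g) (hmom : ∀ k < N, Integrable (fun x => ‖x‖ ^ k * ‖g x‖))
    (hvan : ∀ l : List (Fin d), l.length < N → ∫ x, negIMonomial l x * g x = 0)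
    {l : List (Fin d)} {M : ℕ} (h : l.length + M < N) (ω : Ed d) :
    FTc (fun x => negIMonomial l x * g x) ω
      = ∫ x, negIMonomial l x * expRem (M + 1) (-Complex.I * ((inner ℝ x ω : ℝ) : ℂ)) * g x := by
  set z : Ed d → ℂ := fun x => -Complex.I * ((inner ℝ x ω : ℝ) : ℂ)
  have hint (k : ℕ) (hk : k ∈ Finset.range (M + 1)) :
      Integrable (fun x => (k ! : ℂ)⁻¹ * (z x ^ k * negIMonomial l x * g x)) :=
    (integrable_neg_I_mul_inner_pow_mul_negIMonomial_mul hg k l ω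
      (hmom _ (by rw [Finset.mem_range] at hk; omega))).const_mul _
  have hrem : Integrable (fun x => negIMonomial l x * expRem (M + 1) (z x) * g x) :=
    integrable_mul_of_norm_le_pow (hmom _ h) hg (by fun_prop : Continuous _).aestronglyMeasurable
      (c := 2 * ‖ω‖ ^ M) fun x => by
        calc _ ≤ ‖ω‖ ^ M * ‖x‖ ^ (l.length + M) * min 2 (‖x‖ * ‖ω‖) :=
              norm_negIMonomial_mul_expRem_le l M x ω
          _ ≤ ‖ω‖ ^ M * ‖x‖ ^ (l.length + M) * 2 := by gcongr; exact min_le_left _ _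
          _ = _ := by ring
  have hsplit : (fun x => negIMonomial l x * g x * Complex.exp (z x))
      = fun x => negIMonomial l x * expRem (M + 1) (z x) * g x
          + ∑ k ∈ Finset.range (M + 1), (k ! : ℂ)⁻¹ * (z x ^ k * negIMonomial l x * g x) := by
    ext x
    have hsum : ∑ k ∈ Finset.range (M + 1), (k ! : ℂ)⁻¹ * (z x ^ k * negIMonomial l x * g x)
        = negIMonomial l x * g x * ∑ k ∈ Finset.range (M + 1), z x ^ k / k ! := by
      rw [Finset.mul_sum]
      exact Finset.sum_congr rfl fun k _ => by ring
    rw [hsum, expRem]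
    ring
  rw [FTc, hsplit, integral_add hrem (integrable_finsetSum _ hint), integral_finsetSum _ hint,
    Finset.sum_eq_zero fun k hk => by
      rw [integral_const_mul, integral_neg_I_mul_inner_pow_mul_negIMonomial_mul_eq_zero hg hmom
        hvan ω k l (by rw [Finset.mem_range] at hk; omega), mul_zero], add_zero]

lemma norm_FTc_negIMonomial_mul_le
    (hg : AEStronglyMeasurable g) (hmom : ∀ k < N, Integrable (fun x => ‖x‖ ^ k * ‖g x‖))
    (hvan : ∀ l : List (Fin d), l.length < N → ∫ x, negIMonomial l x * g x = 0)
    {l : List (Fin d)} {M : ℕ} (h : l.length + M < N) (ω : Ed d) :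
    ‖FTc (fun x => negIMonomial l x * g x) ω‖
      ≤ ‖ω‖ ^ M * ∫ x, ‖x‖ ^ (l.length + M) * ‖g x‖ * min 2 (‖x‖ * ‖ω‖) := by
  rw [FTc_negIMonomial_mul_eq_integral_expRem hg hmom hvan h, ← integral_const_mul]
  refine (norm_integral_le_integral_norm _).trans (integral_mono_of_nonneg
    (ae_of_all _ fun _ => norm_nonneg _)
    ((integrable_mul_min_two_norm_mul (hmom _ h) ω).const_mul _) (ae_of_all _ fun x => ?_))
  calc _ = ‖negIMonomial l x * expRem (M + 1) (-Complex.I * ((inner ℝ x ω : ℝ) : ℂ))‖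
        * ‖g x‖ := norm_mul _ _
    _ ≤ ‖ω‖ ^ M * ‖x‖ ^ (l.length + M) * min 2 (‖x‖ * ‖ω‖) * ‖g x‖ := by
        gcongr; exact norm_negIMonomial_mul_expRem_le l M x ω
    _ = _ := by ring

lemma FTc_negIMonomial_mul_isLittleO
    (hg : AEStronglyMeasurable g) (hmom : ∀ k < N, Integrable (fun x => ‖x‖ ^ k * ‖g x‖))
    (hvan : ∀ l : List (Fin d), l.length < N → ∫ x, negIMonomial l x * g x = 0)
    {l : List (Fin d)} {M : ℕ} (h : l.length + M < N) :
    FTc (fun x => negIMonomial l x * g x) =o[𝓝 0] fun ω => ‖ω‖ ^ M := by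
  have hdom := tendsto_integral_mul_min_two_norm_mul (F := Ed d) (hmom _ h)
  refine Asymptotics.isLittleO_iff.2 fun c hc => ?_
  filter_upwards [hdom.eventually (Iic_mem_nhds hc)] with ω hω
  calc _ ≤ ‖ω‖ ^ M * ∫ x, ‖x‖ ^ (l.length + M) * ‖g x‖ * min 2 (‖x‖ * ‖ω‖) :=
        norm_FTc_negIMonomial_mul_le hg hmom hvan h ω
    _ ≤ ‖ω‖ ^ M * c := by gcongr
    _ = c * ‖‖ω‖ ^ M‖ := by rw [norm_pow, norm_norm, mul_comm]

end VanishingMoments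

lemma IsLN.integrable_norm_pow_mul {d N : ℕ} {f : Ed d → ℝ} {C ε : ℝ} (hf : IsLN d N f C ε)
    {k : ℕ} (hk : k < N) : Integrable (fun x : Ed d => ‖x‖ ^ k * ‖(f x : ℂ)‖) := by
  have hr : (Module.finrank ℝ (Ed d) : ℝ) < d + 1 - ε := by
    rw [finrank_euclideanSpace_fin]
    linarith [hf.eps_lt_one]
  refine ((integrable_one_add_norm hr).const_mul C).mono'
    ((continuous_norm.pow k).mul
      (Complex.continuous_ofReal.comp hf.smooth.continuous).norm).aestronglyMeasurable
    (ae_of_all _ fun x => ?_)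
  have hx : (1 : ℝ) ≤ 1 + ‖x‖ := by simp
  have hkN : (k : ℝ) + 1 ≤ N := by exact_mod_cast hk
  rw [Complex.norm_real, Real.norm_of_nonneg (by positivity), Real.norm_eq_abs]
  calc ‖x‖ ^ k * |f x| ≤ (1 + ‖x‖) ^ (k : ℝ) * (C * (1 + ‖x‖) ^ (-(d : ℝ) - N + ε)) := by
        rw [Real.rpow_natCast]
        gcongr
        · linarith
        · exact hf.decay x
    _ = C * (1 + ‖x‖) ^ ((k : ℝ) + (-(d : ℝ) - N + ε)) := by
        rw [mul_left_comm, ← Real.rpow_add (by positivity)]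
    _ ≤ C * (1 + ‖x‖) ^ (-((d : ℝ) + 1 - ε)) :=
        mul_le_mul_of_nonneg_left (Real.rpow_le_rpow_of_exponent_le hx (by linarith))
          hf.Cpos.le

lemma IsLN.integral_negIMonomial_mul_eq_zero {d N : ℕ} {f : Ed d → ℝ} {C ε : ℝ}
    (hf : IsLN d N f C ε) (l : List (Fin d)) (hl : l.length < N) :
    ∫ x, negIMonomial l x * (f x : ℂ) = 0 := by
  have hreal := hf.moments (fun j => l.count j) (by rwa [sum_list_count_eq_length])
  simp_rw [negIMonomial_eq_prod_pow_count, mul_assoc, ← Complex.ofReal_pow,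
    ← Complex.ofReal_prod, ← Complex.ofReal_mul]
  rw [integral_const_mul, integral_complex_ofReal, hreal, Complex.ofReal_zero, mul_zero]

theorem fourier_deriv_little_o_general (d N : ℕ) (hN : 1 ≤ N)
    (f : Ed d → ℝ) (C ε : ℝ) (hf : IsLN d N f C ε) :
    ContDiff ℝ (N - 1 : ℕ) (FT d f) ∧
    ∀ β : Fin d → ℕ, (∑ j, β j) < N →
      ∀ γ : ℝ, 0 < γ → ∃ ρ : ℝ, 0 < ρ ∧ ∀ ω : Ed d, 0 < ‖ω‖ → ‖ω‖ < ρ →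
        ‖mderiv β (FT d f) ω‖ ≤ γ * ‖ω‖ ^ ((N : ℝ) - 1 - (∑ j, β j)) := by
  have hg : AEStronglyMeasurable (fun x => (f x : ℂ)) :=
    (Complex.continuous_ofReal.comp hf.smooth.continuous).aestronglyMeasurable
  have hmom (k : ℕ) (hk : k < N) := hf.integrable_norm_pow_mul hk
  refine ⟨contDiff_FTc fun k hk => hmom k (by omega), fun β hβ γ hγ => ?_⟩
  have hlen := length_mIdxList β
  have hderiv : mderiv β (FT d f) = FTc (fun x => negIMonomial (mIdxList β) x * f x) :=
    mderivL_FTc hg _ fun k hk => hmom k (by omega)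
  have hlo := FTc_negIMonomial_mul_isLittleO hg hmom hf.integral_negIMonomial_mul_eq_zero
    (l := mIdxList β) (M := N - 1 - ∑ j, β j) (by omega)
  obtain ⟨ρ, hρ, hball⟩ := Metric.eventually_nhds_iff.1 (hlo.def hγ)
  refine ⟨ρ, hρ, fun ω _ hω => ?_⟩
  have hexp : (N : ℝ) - 1 - ∑ j, β j = ((N - 1 - ∑ j, β j : ℕ) : ℝ) := by
    rw [Nat.cast_sub (by omega), Nat.cast_sub hN]
    push_cast
    ring
  rw [hderiv, hexp, Real.rpow_natCast]
  simpa using hball (by simpa using hω)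

/-- For `f ∈ L_N(ℝ^d)`, the Fourier transform has continuous derivatives up to order `N-1`, and
`D^β f̂(ω) = o(‖ω‖^(N-1-|β|))` as `ω → 0`. -/
theorem fourier_deriv_little_o (d N : ℕ) (hd : 1 ≤ d) (hN : 1 ≤ N)
    (f : Ed d → ℝ) (C ε : ℝ) (hf : IsLN d N f C ε) :
    ContDiff ℝ (N - 1 : ℕ) (FT d f) ∧
    ∀ β : Fin d → ℕ, (∑ j, β j) < N →
      ∀ γ : ℝ, 0 < γ → ∃ ρ : ℝ, 0 < ρ ∧ ∀ ω : Ed d, 0 < ‖ω‖ → ‖ω‖ < ρ →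
        ‖mderiv β (FT d f) ω‖ ≤ γ * ‖ω‖ ^ ((N : ℝ) - 1 - (∑ j, β j)) :=
  fourier_deriv_little_o_general d N hN f C ε hf

end
end

section
/- Let 0 < ε < 1/2 and let θ : ℝ → ℝ satisfy: θ(x) = 1 for x ∈ [−1+ε, 1−ε]; θ(x) = 0 for |x| ≥ 1+ε; and θ(x)² + θ(x−2)² = 1 for all x ∈ [0,2]. Define F : (0,∞) → ℝ by F(ω) = θ(log₂(2^{1+ε}ω/π))·cos((π/2)·log₂(2^{1+ε}ω/π)). Then for every ω > 0, only finitely many of the terms F(2^k ω)², k ∈ ℤ, are nonzero, and ∑_{k∈ℤ} F(2^k ω)² = 1. -/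
/-!
In the logarithmic variable `y = log₂(2^{1+ε} ω / π)` the dilation `ω ↦ 2^k ω` is the translation
`y ↦ y + k`, so the sum is `∑ₖ g(t + k)` with `g = θ² cos²(π y / 2)`. As `θ` vanishes off `(-2, 2)`,
only the four translates `x - 2, x - 1, x, x + 1` of `x = fract t` contribute. There the cosine factor
is `cos²(π x / 2)` at `x, x - 2` and `sin²(π x / 2)` at `x ± 1`, so the partition identity at `x` and
at `x + 1` reduces the sum to `cos² + sin² = 1`.
-/

open Real

noncomputable def windowedCosSq (θ : ℝ → ℝ) (y : ℝ) : ℝ := θ y ^ 2 * cos (π / 2 * y) ^ 2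

theorem sum_windowedCosSq_add_eq_one {θ : ℝ → ℝ}
    (hθp : ∀ x : ℝ, 0 ≤ x → x ≤ 2 → θ x ^ 2 + θ (x - 2) ^ 2 = 1) {x : ℝ} (hx : x ∈ Set.Icc 0 1) :
    ∑ k ∈ ({-2, -1, 0, 1} : Finset ℤ), windowedCosSq θ (x + k) = 1 := by
  obtain ⟨hx0, hx1⟩ := hx
  have hθx : θ x ^ 2 + θ (x - 2) ^ 2 = 1 := hθp x hx0 (by linarith)
  have hθx' : θ (x + 1) ^ 2 + θ (x - 1) ^ 2 = 1 := by
    have h := hθp (x + 1) (by linarith) (by linarith)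
    rwa [show x + 1 - 2 = x - 1 by ring] at h
  have hcos₂ : cos (π / 2 * (x - 2)) = -cos (π / 2 * x) := by
    rw [show π / 2 * (x - 2) = π / 2 * x - π by ring, cos_sub_pi]
  have hcos₁ : cos (π / 2 * (x - 1)) = sin (π / 2 * x) := by
    rw [show π / 2 * (x - 1) = π / 2 * x - π / 2 by ring, cos_sub_pi_div_two]
  have hcos₁' : cos (π / 2 * (x + 1)) = -sin (π / 2 * x) := by
    rw [show π / 2 * (x + 1) = π / 2 * x + π / 2 by ring, cos_add_pi_div_two]
  norm_num [Finset.sum_insert, ← sub_eq_add_neg, windowedCosSq, hcos₁, hcos₂, hcos₁']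
  linear_combination cos (π / 2 * x) ^ 2 * hθx + sin (π / 2 * x) ^ 2 * hθx' +
    sin_sq_add_cos_sq (π / 2 * x)

theorem windowedCosSq_add_intCast_eq_zero {θ : ℝ → ℝ} (hθ0 : ∀ y : ℝ, 2 ≤ |y| → θ y = 0)
    {x : ℝ} (hx : x ∈ Set.Ico 0 1) {k : ℤ} (hk : k ∉ ({-2, -1, 0, 1} : Finset ℤ)) :
    windowedCosSq θ (x + k) = 0 := by
  obtain ⟨hx0, hx1⟩ := hx
  suffices 2 ≤ |x + k| by simp [windowedCosSq, hθ0 _ this]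
  have hk' : k ≤ -3 ∨ 2 ≤ k := by
    simp only [Finset.mem_insert, Finset.mem_singleton] at hk
    omega
  rcases hk' with hk' | hk'
  · have : (k : ℝ) ≤ -3 := by exact_mod_cast hk'
    rw [abs_of_neg (by linarith)]
    linarith
  · have : (2 : ℝ) ≤ k := by exact_mod_cast hk'
    rw [abs_of_pos (by linarith)]
    linarith

theorem comp_add_intCast_eq_comp_fract_add_intCast (f : ℝ → ℝ) (t : ℝ) :
    (fun k : ℤ => f (t + k)) = (fun k : ℤ => f (Int.fract t + k)) ∘ Equiv.addLeft ⌊t⌋ := by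
  ext k
  simp only [Function.comp_apply, Equiv.coe_addLeft, Int.cast_add, ← add_assoc,
    Int.fract_add_floor]

theorem finite_support_windowedCosSq_add_intCast {θ : ℝ → ℝ}
    (hθ0 : ∀ y : ℝ, 2 ≤ |y| → θ y = 0) (t : ℝ) :
    (Function.support fun k : ℤ => windowedCosSq θ (t + k)).Finite := by
  rw [comp_add_intCast_eq_comp_fract_add_intCast, Function.support_comp_eq_preimage]
  refine (Finset.finite_toSet {-2, -1, 0, 1}).subset (fun k hk => ?_) |>.preimage
    (Equiv.injective _).injOn
  by_contra hk'
  exact hk (windowedCosSq_add_intCast_eq_zero hθ0 ⟨Int.fract_nonneg t, Int.fract_lt_one t⟩ hk')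

theorem hasSum_windowedCosSq_add_intCast {θ : ℝ → ℝ} (hθ0 : ∀ y : ℝ, 2 ≤ |y| → θ y = 0)
    (hθp : ∀ x : ℝ, 0 ≤ x → x ≤ 2 → θ x ^ 2 + θ (x - 2) ^ 2 = 1) (t : ℝ) :
    HasSum (fun k : ℤ => windowedCosSq θ (t + k)) 1 := by
  have hfract : Int.fract t ∈ Set.Ico 0 1 := ⟨Int.fract_nonneg t, Int.fract_lt_one t⟩
  rw [comp_add_intCast_eq_comp_fract_add_intCast, Equiv.hasSum_iff,
    ← sum_windowedCosSq_add_eq_one hθp (Set.Ico_subset_Icc_self hfract)]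
  exact hasSum_sum_of_ne_finset_zero fun k hk => windowedCosSq_add_intCast_eq_zero hθ0 hfract hk

theorem logb_two_zpow_mul (k : ℤ) {a : ℝ} (ha : a ≠ 0) :
    logb 2 ((2 : ℝ) ^ k * a) = logb 2 a + k := by
  rw [logb_mul (by positivity) ha, ← rpow_intCast, logb_rpow (by norm_num) (by norm_num), add_comm]

theorem simoncelli_tight_frame_general (ε : ℝ) (hε' : ε < 1/2)
    (θ : ℝ → ℝ)
    (hθ0 : ∀ x : ℝ, 1 + ε ≤ |x| → θ x = 0)
    (hθp : ∀ x : ℝ, 0 ≤ x → x ≤ 2 → θ x ^ 2 + θ (x - 2) ^ 2 = 1)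
    (F : ℝ → ℝ)
    (hF : ∀ ω : ℝ, F ω =
      θ (logb 2 ((2:ℝ) ^ ((1:ℝ) + ε) * ω / π)) *
        Real.cos (π / 2 * logb 2 ((2:ℝ) ^ ((1:ℝ) + ε) * ω / π))) :
    ∀ ω : ℝ, 0 < ω →
      {k : ℤ | F ((2:ℝ) ^ k * ω) ^ 2 ≠ 0}.Finite ∧
      ∑' k : ℤ, F ((2:ℝ) ^ k * ω) ^ 2 = 1 := by
  intro ω hω
  set t := logb 2 ((2:ℝ) ^ ((1:ℝ) + ε) * ω / π)
  have hlog (k : ℤ) : logb 2 ((2:ℝ) ^ ((1:ℝ) + ε) * ((2:ℝ) ^ k * ω) / π) = t + k := by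
    rw [← logb_two_zpow_mul k (by positivity)]
    ring_nf
  have hterms : (fun k : ℤ => F ((2:ℝ) ^ k * ω) ^ 2) = fun k : ℤ => windowedCosSq θ (t + k) := by
    ext k
    rw [hF, windowedCosSq, mul_pow, hlog]
  have hθ0' : ∀ y : ℝ, 2 ≤ |y| → θ y = 0 := fun y hy => hθ0 y (by linarith)
  change (Function.support _).Finite ∧ _
  rw [hterms]
  exact ⟨finite_support_windowedCosSq_add_intCast hθ0' t,
    (hasSum_windowedCosSq_add_intCast hθ0' hθp t).tsum_eq⟩

/-- Tight-frame identity for the modified Simoncelli profile: for a Meyer-type window `θ`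
(equal to `1` on `[-1+ε, 1-ε]`, vanishing for `|x| ≥ 1+ε`, and satisfying the partition
identity `θ(x)² + θ(x-2)² = 1` on `[0,2]`), the radial profile
`F(ω) = θ(log₂(2^{1+ε} ω/π)) cos((π/2) log₂(2^{1+ε} ω/π))` satisfies, for every `ω > 0`,
that only finitely many terms `F(2^k ω)²`, `k ∈ ℤ`, are nonzero and `∑_{k∈ℤ} F(2^k ω)² = 1`. -/
theorem simoncelli_tight_frame (ε : ℝ) (hε : 0 < ε) (hε' : ε < 1/2)
    (θ : ℝ → ℝ)
    (hθ1 : ∀ x : ℝ, -1 + ε ≤ x → x ≤ 1 - ε → θ x = 1)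
    (hθ0 : ∀ x : ℝ, 1 + ε ≤ |x| → θ x = 0)
    (hθp : ∀ x : ℝ, 0 ≤ x → x ≤ 2 → θ x ^ 2 + θ (x - 2) ^ 2 = 1)
    (F : ℝ → ℝ)
    (hF : ∀ ω : ℝ, F ω =
      θ (logb 2 ((2:ℝ) ^ ((1:ℝ) + ε) * ω / π)) *
        Real.cos (π / 2 * logb 2 ((2:ℝ) ^ ((1:ℝ) + ε) * ω / π))) :
    ∀ ω : ℝ, 0 < ω →
      {k : ℤ | F ((2:ℝ) ^ k * ω) ^ 2 ≠ 0}.Finite ∧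
      ∑' k : ℤ, F ((2:ℝ) ^ k * ω) ^ 2 = 1 :=
  simoncelli_tight_frame_general ε hε' θ hθ0 hθp F hF
end

section
/- Let 0 < ε < 1, let g : ℝ → ℝ be a nonnegative integrable function with g(t) = 0 for |t| > 1 and ∫_{−1}^{1} g(t) dt = π/2, and define G(ω) = ∫_{−∞}^{ω} g(t) dt, H_ε(ω) = G((ω+1)/ε) − π/2 + G((ω−1)/ε), and θ_ε(ω) = cos(H_ε(ω)). Then for every ω with 0 ≤ ω ≤ 2, one has θ_ε(ω)² + θ_ε(ω−2)² = 1. -/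
open Real MeasureTheory Set

/-
Since `ε < 1`, for `0 ≤ ω ≤ 2` the outer arguments `(ω+1)/ε` of `H_ε(ω)` and `(ω-3)/ε` of
`H_ε(ω-2)` lie beyond the support `[-1, 1]` of `g`, where `G` is constant (`π/2` and `0`). Hence
`H_ε(ω-2) = H_ε(ω) - π/2`, and `cos² x + cos² (x - π/2) = cos² x + sin² x = 1`.
-/

section VanishingOutside

variable {E : Type*} [NormedAddCommGroup E] [NormedSpace ℝ E] {μ : Measure ℝ}
  {g : ℝ → E} {a b y : ℝ}

theorem setIntegral_Iic_eq_setIntegral_Icc_of_vanishing_outside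
    (hg : ∀ t ∉ Icc a b, g t = 0) (hy : b ≤ y) :
    ∫ t in Iic y, g t ∂μ = ∫ t in Icc a b, g t ∂μ := by
  rw [setIntegral_eq_integral_of_forall_compl_eq_zero (s := Iic y)
      fun t ht => hg t fun h => ht (mem_Iic.2 (h.2.trans hy)),
    setIntegral_eq_integral_of_forall_compl_eq_zero hg]

theorem setIntegral_Iic_eq_zero_of_vanishing_outside
    (hg : ∀ t ∉ Icc a b, g t = 0) (hy : y < a) :
    ∫ t in Iic y, g t ∂μ = 0 :=
  setIntegral_eq_zero_of_forall_eq_zero fun t ht =>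
    hg t fun h => (h.1.trans (mem_Iic.1 ht)).not_gt hy

end VanishingOutside

theorem cos_sq_add_cos_sub_pi_div_two_sq (x : ℝ) : cos x ^ 2 + cos (x - π / 2) ^ 2 = 1 := by
  rw [cos_sub_pi_div_two, cos_sq_add_sin_sq]

theorem meyer_window_partition_general (ε : ℝ) (hε : 0 < ε) (hε1 : ε < 1)
    (g : ℝ → ℝ)
    (hsupp : ∀ t : ℝ, 1 < |t| → g t = 0)
    (hint : ∫ t in Set.Icc (-1 : ℝ) 1, g t = π / 2)
    (G H θ : ℝ → ℝ)
    (hG : ∀ ω : ℝ, G ω = ∫ t in Set.Iic ω, g t)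
    (hH : ∀ ω : ℝ, H ω = G ((ω + 1) / ε) - π / 2 + G ((ω - 1) / ε))
    (hθ : ∀ ω : ℝ, θ ω = Real.cos (H ω)) :
    ∀ ω : ℝ, 0 ≤ ω → ω ≤ 2 → θ ω ^ 2 + θ (ω - 2) ^ 2 = 1 := by
  intro ω h0 h2
  have hg : ∀ t ∉ Icc (-1 : ℝ) 1, g t = 0 := fun t ht =>
    hsupp t (by rw [mem_Icc, not_and_or, not_le, not_le] at ht; cases abs_cases t <;> grind)
  have hG_left : G ((ω + 1) / ε) = π / 2 := by
    rw [hG, setIntegral_Iic_eq_setIntegral_Icc_of_vanishing_outside hg, hint]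
    rw [le_div_iff₀ hε]; linarith
  have hG_right : G ((ω - 2 - 1) / ε) = 0 := by
    rw [hG, setIntegral_Iic_eq_zero_of_vanishing_outside hg]
    rw [div_lt_iff₀ hε]; linarith
  have hH_shift : H (ω - 2) = H ω - π / 2 := by
    rw [hH, hH, hG_left, hG_right, show ω - 2 + 1 = ω - 1 by ring]; ring
  rw [hθ, hθ, hH_shift, cos_sq_add_cos_sub_pi_div_two_sq]

/-- Partition identity for the Meyer window `θ_ε = cos ∘ H_ε`, where
`G(ω) = ∫_{-∞}^{ω} g`, `H_ε(ω) = G((ω+1)/ε) - π/2 + G((ω-1)/ε)`, built from a nonnegative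
bump `g` supported in `[-1,1]` with total integral `π/2`:
`θ_ε(ω)² + θ_ε(ω-2)² = 1` for `0 ≤ ω ≤ 2`. -/
theorem meyer_window_partition (ε : ℝ) (hε : 0 < ε) (hε1 : ε < 1)
    (g : ℝ → ℝ) (hg0 : ∀ t : ℝ, 0 ≤ g t) (hgi : Integrable g)
    (hsupp : ∀ t : ℝ, 1 < |t| → g t = 0)
    (hint : ∫ t in Set.Icc (-1 : ℝ) 1, g t = π / 2)
    (G H θ : ℝ → ℝ)
    (hG : ∀ ω : ℝ, G ω = ∫ t in Set.Iic ω, g t)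
    (hH : ∀ ω : ℝ, H ω = G ((ω + 1) / ε) - π / 2 + G ((ω - 1) / ε))
    (hθ : ∀ ω : ℝ, θ ω = Real.cos (H ω)) :
    ∀ ω : ℝ, 0 ≤ ω → ω ≤ 2 → θ ω ^ 2 + θ (ω - 2) ^ 2 = 1 :=
  meyer_window_partition_general ε hε hε1 g hsupp hint G H θ hG hH hθ
end
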